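/- If a Borel probability measure μ on a compact metric space X is compatible with the persistent shadowing property for the continuous action φ: G × X → X, then φ has the persistent shadowing property on supp(μ): for every ε > 0 there is δ > 0 such that every δ-pseudo orbit f of any continuous action ψ with d_S(φ,ψ) < δ satisfying f(e) ∈ supp(μ) can be ε-shadowed by a ψ-orbit. -/

import Mathlib

open MeasureTheory

def ContGroupAction (G : Type*) [Group G] (X : Type*) [MetricSpace X] (φ : G → X → X) : Prop :=
  (∀ g : G, Continuous (φ g)) ∧ (∀ g h : G, ∀ x : X, φ (g * h) x = φ g (φ h x)) ∧
    (∀ x : X, φ (1 : G) x = x)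

def IsPseudoOrbit {G : Type*} [Group G] {X : Type*} [MetricSpace X]
    (S : Set G) (ψ : G → X → X) (δ : ℝ) (f : G → X) : Prop :=
  ∀ s ∈ S, ∀ g : G, dist (f (s * g)) (ψ s (f g)) < δ

def CloseActions {G : Type*} [Group G] {X : Type*} [MetricSpace X]
    (S : Set G) (φ ψ : G → X → X) (δ : ℝ) : Prop :=
  ∀ s ∈ S, ∀ x : X, dist (φ s x) (ψ s x) < δ

def PersistentShadowing {G : Type*} [Group G] {X : Type*} [MetricSpace X]
    (S : Set G) (φ : G → X → X) : Prop :=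
  ∀ ε > (0:ℝ), ∃ δ > (0:ℝ), ∀ ψ : G → X → X, ContGroupAction G X ψ → CloseActions S φ ψ δ →
    ∀ f : G → X, IsPseudoOrbit S ψ δ f → ∃ p : X, ∀ g : G, dist (f g) (ψ g p) < ε

def Shadowing {G : Type*} [Group G] {X : Type*} [MetricSpace X]
    (S : Set G) (φ : G → X → X) : Prop :=
  ∀ ε > (0:ℝ), ∃ δ > (0:ℝ), ∀ f : G → X, IsPseudoOrbit S φ δ f →
    ∃ p : X, ∀ g : G, dist (f g) (φ g p) < ε

def PShSet {G : Type*} [Group G] {X : Type*} [MetricSpace X]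
    (S : Set G) (φ : G → X → X) (δ ε : ℝ) : Set X :=
  {x | ∀ ψ : G → X → X, ContGroupAction G X ψ → CloseActions S φ ψ δ →
    ∀ f : G → X, IsPseudoOrbit S ψ δ f → f 1 = x →
      ∃ p : X, ∀ g : G, dist (f g) (ψ g p) < ε}

def PShPoint {G : Type*} [Group G] {X : Type*} [MetricSpace X]
    (S : Set G) (φ : G → X → X) (x : X) : Prop :=
  ∀ ε > (0:ℝ), ∃ δ > (0:ℝ), x ∈ PShSet S φ δ ε

def ShPoint {G : Type*} [Group G] {X : Type*} [MetricSpace X]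
    (S : Set G) (φ : G → X → X) (x : X) : Prop :=
  ∀ ε > (0:ℝ), ∃ δ > (0:ℝ), ∀ f : G → X, IsPseudoOrbit S φ δ f → f 1 = x →
    ∃ p : X, ∀ g : G, dist (f g) (φ g p) < ε

def UPersisBetaPoint {G : Type*} [Group G] {X : Type*} [MetricSpace X]
    (S : Set G) (φ : G → X → X) (x : X) : Prop :=
  ∀ ε > (0:ℝ), ∃ δ > (0:ℝ), ∀ ψ : G → X → X, ContGroupAction G X ψ → CloseActions S φ ψ δ →
    ∀ x' : X, dist x' x < δ → ∃ y : X, ∀ g : G, dist (φ g x') (ψ g y) < ε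

def BetaPersistent {G : Type*} [Group G] {X : Type*} [MetricSpace X]
    (S : Set G) (φ : G → X → X) : Prop :=
  ∀ ε > (0:ℝ), ∃ δ > (0:ℝ), ∀ ψ : G → X → X, ContGroupAction G X ψ → CloseActions S φ ψ δ →
    ∀ x : X, ∃ y : X, ∀ g : G, dist (φ g x) (ψ g y) < ε

def CompatiblePSh {G : Type*} [Group G] {X : Type*} [MetricSpace X] [MeasurableSpace X]
    (S : Set G) (φ : G → X → X) (μ : Measure X) : Prop :=
  ∀ ε > (0:ℝ), ∃ δ > (0:ℝ), ∀ A : Set X, MeasurableSet A → 0 < μ A →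
    (A ∩ PShSet S φ δ ε).Nonempty

def MeasSupp {X : Type*} [MetricSpace X] [MeasurableSpace X] (μ : Measure X) : Set X :=
  {x | ∀ U : Set X, IsOpen U → x ∈ U → 0 < μ U}

/-!
Pick `δ₀` from the compatibility of `μ` for `ε / 2`. Given a `δ₀ / 3`-pseudo orbit `f` of `ψ` with
`f 1` in the support, every neighbourhood of `f 1` has positive measure and hence contains a point
`x` at which `δ₀`-pseudo orbits of `ψ` are `ε / 2`-shadowed. Choosing `x` close enough to `f 1`
that, by continuity of the finitely many maps `ψ s`, `ψ s x` stays close to `ψ s (f 1)`, the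
sequence `f` with `f 1` replaced by `x` is a `δ₀`-pseudo orbit; an orbit shadowing it shadows `f`.
-/

open Filter Topology

lemma dist_update_le {α X : Type*} [DecidableEq α] [MetricSpace X] (f : α → X) (a₀ a : α) (x : X) :
    dist (Function.update f a₀ x a) (f a) ≤ dist x (f a₀) := by
  rcases eq_or_ne a a₀ with rfl | ha
  · simp
  · simp [Function.update_of_ne ha]

section PseudoOrbit

variable {G X : Type*} [Group G] [MetricSpace X] {S : Set G} {ψ : G → X → X}

lemma IsPseudoOrbit.mono {δ δ' : ℝ} {f : G → X} (hf : IsPseudoOrbit S ψ δ f) (hδ : δ ≤ δ') :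
    IsPseudoOrbit S ψ δ' f :=
  fun s hs g => (hf s hs g).trans_le hδ

lemma CloseActions.mono {φ : G → X → X} {δ δ' : ℝ} (h : CloseActions S φ ψ δ) (hδ : δ ≤ δ') :
    CloseActions S φ ψ δ' :=
  fun s hs x => (h s hs x).trans_le hδ

lemma IsPseudoOrbit.update [DecidableEq G] {δ r : ℝ} {f : G → X} (hf : IsPseudoOrbit S ψ δ f)
    {g₀ : G} {x : X} (hx : dist x (f g₀) ≤ r) (hψx : ∀ s ∈ S, dist (ψ s (f g₀)) (ψ s x) ≤ r) :
    IsPseudoOrbit S ψ (δ + 2 * r) (Function.update f g₀ x) := by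
  intro s hs g
  have hr : 0 ≤ r := dist_nonneg.trans hx
  have hmove : dist (Function.update f g₀ x (s * g)) (f (s * g)) ≤ r :=
    (dist_update_le f g₀ (s * g) x).trans hx
  rcases eq_or_ne g g₀ with rfl | hg
  · calc dist (Function.update f g x (s * g)) (ψ s (Function.update f g x g))
        ≤ dist (Function.update f g x (s * g)) (f (s * g)) + dist (f (s * g)) (ψ s (f g))
          + dist (ψ s (f g)) (ψ s x) := by
          rw [Function.update_self]; exact dist_triangle4 _ _ _ _
      _ < r + δ + r := by linarith [hf s hs g, hψx s hs]
      _ = δ + 2 * r := by ring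
  · calc dist (Function.update f g₀ x (s * g)) (ψ s (Function.update f g₀ x g))
        ≤ dist (Function.update f g₀ x (s * g)) (f (s * g)) + dist (f (s * g)) (ψ s (f g)) := by
          rw [Function.update_of_ne hg]; exact dist_triangle _ _ _
      _ < δ + 2 * r := by linarith [hf s hs g]

end PseudoOrbit

lemma eventually_dist_apply_lt {ι X : Type*} [MetricSpace X] {S : Set ι} {ψ : ι → X → X}
    (hS : S.Finite) (hψ : ∀ s, Continuous (ψ s)) (x : X) {c : ℝ} (hc : 0 < c) :
    ∀ᶠ y in 𝓝 x, ∀ s ∈ S, dist (ψ s x) (ψ s y) < c := by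
  refine (eventually_all_finite hS).2 fun s _ => ?_
  simpa only [dist_comm] using Metric.tendsto_nhds.1 ((hψ s).tendsto x) c hc

lemma frequently_mem_of_mem_measSupp {X : Type*} [MetricSpace X] [MeasurableSpace X]
    [OpensMeasurableSpace X] {μ : Measure X} {T : Set X}
    (hT : ∀ A : Set X, MeasurableSet A → 0 < μ A → (A ∩ T).Nonempty) {x : X}
    (hx : x ∈ MeasSupp μ) : ∃ᶠ y in 𝓝 x, y ∈ T :=
  frequently_nhds_iff.2 fun U hxU hU => hT U hU.measurableSet (hx U hU hxU)

theorem stmt9_general {G : Type*} [Group G] {X : Type*} [MetricSpace X]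
    [MeasurableSpace X] [BorelSpace X]
    (S : Set G) (hSfin : S.Finite)
    (φ : G → X → X)
    (μ : Measure X)
    (hμ : CompatiblePSh S φ μ) :
    ∀ ε > (0:ℝ), ∃ δ > (0:ℝ), ∀ ψ : G → X → X, ContGroupAction G X ψ →
      CloseActions S φ ψ δ → ∀ f : G → X, IsPseudoOrbit S ψ δ f →
        f 1 ∈ MeasSupp μ → ∃ p : X, ∀ g : G, dist (f g) (ψ g p) < ε := by
  classical
  intro ε hε
  obtain ⟨δ₀, hδ₀, hA⟩ := hμ (ε / 2) (half_pos hε)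
  refine ⟨δ₀ / 3, by positivity, fun ψ hψ hclose f hf hsupp => ?_⟩
  set r := min (δ₀ / 3) (ε / 2)
  have hr : 0 < r := by positivity
  obtain ⟨x, hxP, hxf, hψx⟩ := ((frequently_mem_of_mem_measSupp hA hsupp).and_eventually
    ((Metric.eventually_nhds_iff.2 ⟨r, hr, fun _ hy => hy⟩).and
      (eventually_dist_apply_lt hSfin hψ.1 (f 1) hr))).exists
  have hf' : IsPseudoOrbit S ψ δ₀ (Function.update f 1 x) :=
    (hf.update hxf.le fun s hs => (hψx s hs).le).mono (by linarith [min_le_left (δ₀ / 3) (ε / 2)])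
  obtain ⟨p, hp⟩ := hxP ψ hψ (hclose.mono (by linarith)) _ hf' (Function.update_self 1 x f)
  refine ⟨p, fun g => ?_⟩
  calc dist (f g) (ψ g p)
      ≤ dist (Function.update f 1 x g) (f g) + dist (Function.update f 1 x g) (ψ g p) :=
        dist_triangle_left _ _ _
    _ < r + ε / 2 := add_lt_add_of_le_of_lt ((dist_update_le f 1 g x).trans hxf.le) (hp g)
    _ ≤ ε := by linarith [min_le_right (δ₀ / 3) (ε / 2)]

theorem stmt9 {G : Type*} [Group G] {X : Type*} [MetricSpace X] [CompactSpace X]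
    [MeasurableSpace X] [BorelSpace X]
    (S : Set G) (hSfin : S.Finite) (hSsym : ∀ s ∈ S, s⁻¹ ∈ S)
    (hSgen : Subgroup.closure S = ⊤)
    (φ : G → X → X) (hφ : ContGroupAction G X φ)
    (μ : Measure X) [IsProbabilityMeasure μ]
    (hμ : CompatiblePSh S φ μ) :
    ∀ ε > (0:ℝ), ∃ δ > (0:ℝ), ∀ ψ : G → X → X, ContGroupAction G X ψ →
      CloseActions S φ ψ δ → ∀ f : G → X, IsPseudoOrbit S ψ δ f →
        f 1 ∈ MeasSupp μ → ∃ p : X, ∀ g : G, dist (f g) (ψ g p) < ε :=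
  stmt9_general S hSfin φ μ hμ
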